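/- arXiv:1503.08659 — 3 statements merged into one kernel-verified Lean document; each statement's English description precedes it below -/
import Mathlib

section
/- The Kogge-Stone recursion is correct: for all levels i ≥ 0 and indices 1 ≤ j ≤ n, Z_{1+(j-2^i)^+, j} = Z_{1+(j-2^{i-1})^+, j} ∘ Z_{1+(j-2^i)^+, (j-2^{i-1})^+} whenever (j-2^{i-1})^+ ≥ 1+(j-2^i)^+, where Z_{s,t} = z_t ∘ ⋯ ∘ z_s for an associative operator ∘ and (x)^+ = max(x,0). -/
theorem kogge_stone_recursion {α : Type*} (op : α → α → α)
    (hassoc : ∀ a b c, op (op a b) c = op a (op b c))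
    (n : ℕ) (z : ℕ → α) (Z : ℕ → ℕ → α)
    (hZd : ∀ s, Z s s = z s)
    (hZr : ∀ s t, s ≤ t → Z s (t + 1) = op (z (t + 1)) (Z s t)) :
    ∀ i j, 1 ≤ i → 1 ≤ j → j ≤ n → 1 + (j - 2 ^ i) ≤ j - 2 ^ (i - 1) →
      Z (1 + (j - 2 ^ i)) j =
        op (Z (1 + (j - 2 ^ (i - 1))) j) (Z (1 + (j - 2 ^ i)) (j - 2 ^ (i - 1))) := by
  have split : ∀ t s m, s ≤ m → m + 1 ≤ t → Z s t = op (Z (m + 1) t) (Z s m) := by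
    intro t
    induction t with
    | zero => intro s m _ h; omega
    | succ t ih =>
      intro s m hsm hmt
      rcases Nat.lt_or_ge (m + 1) (t + 1) with h | h
      · have h' : m + 1 ≤ t := by omega
        rw [hZr s t (by omega), hZr (m + 1) t h', ih s m hsm h', hassoc]
      · have : m = t := by omega
        subst this
        rw [hZr s m hsm, hZd]
  intro i j hi hj _ h
  have hm1 : 1 ≤ j - 2 ^ (i - 1) := by omega
  have hmj : j - 2 ^ (i - 1) + 1 ≤ j := by
    have : 1 ≤ 2 ^ (i - 1) := Nat.one_le_two_pow
    omega
  have := split j (1 + (j - 2 ^ i)) (j - 2 ^ (i - 1)) h hmj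
  rw [this]
  congr 2
  omega
end

section
/- The Brent-Kung input-halving step preserves carries: if for j = 1, ..., n/2 we set z'_j := z_{2j} ∘ z_{2j-1}, and c'_j denotes the carries of the halved instance (c'_1 = false, c'_{j+1} = y'_j ∨ (x'_j ∧ c'_j)), then c'_{j+1} = c_{2j+1} for all 0 ≤ j ≤ n/2, where c denotes the carries of the original instance. -/
theorem brent_kung_halving (n : ℕ) (hn : Even n)
    (x y x' y' c c' : ℕ → Bool)
    (hx' : ∀ j, 1 ≤ j → x' j = (x (2 * j) && x (2 * j - 1)))
    (hy' : ∀ j, 1 ≤ j → y' j = (y (2 * j) || (x (2 * j) && y (2 * j - 1))))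
    (hc1 : c 1 = false)
    (hc : ∀ i, 1 ≤ i → c (i + 1) = (y i || (x i && c i)))
    (hc'1 : c' 1 = false)
    (hc' : ∀ j, 1 ≤ j → c' (j + 1) = (y' j || (x' j && c' j))) :
    ∀ j, j ≤ n / 2 → c' (j + 1) = c (2 * j + 1) := by
  intro j
  induction j with
  | zero => intro _; simpa using hc'1.trans hc1.symm
  | succ k ih =>
    intro hk
    have ihk := ih (Nat.le_of_succ_le hk)
    rw [hc' (k + 1) (Nat.le_add_left 1 k), hx' (k + 1) (Nat.le_add_left 1 k),
      hy' (k + 1) (Nat.le_add_left 1 k), ihk]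
    have h1 : 2 * (k + 1) = (2 * k + 1) + 1 := by ring
    have h3 : 2 * (k + 1) - 1 = 2 * k + 1 := by omega
    rw [h1]; simp only [Nat.add_sub_cancel]; rw [hc ((2 * k + 1) + 1) (by omega), hc (2 * k + 1) (by omega)]
    cases y (2*k+1+1) <;> cases x (2*k+1+1) <;> cases y (2*k+1) <;>
      cases x (2*k+1) <;> cases c (2*k+1) <;> simp
end

section
/- Combining the Krapchenko reduction with the multi-input generate adder yields the claimed depth: for all n ≥ 2, with τ = ⌈√(log₂ n) + 2·log₂⌈√(log₂ n)⌉⌉, we have log₂(n/2^τ) + 5·⌈√(log₂(n/2^τ))⌉ + 2 + 4τ ≤ log₂ n + 8·⌈√(log₂ n)⌉ + 6·⌈log₂⌈√(log₂ n)⌉⌉ + 2. -/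
theorem combined_depth_bound (n : ℝ) (hn : 2 ≤ n) (hpow : ∃ m : ℕ, n = 2 ^ m)
    (τ : ℤ)
    (hτ : τ = ⌈Real.sqrt (Real.logb 2 n) +
        2 * Real.logb 2 (⌈Real.sqrt (Real.logb 2 n)⌉ : ℝ)⌉)
    (hquot : 1 ≤ n / 2 ^ τ) :
    Real.logb 2 (n / 2 ^ τ) +
        5 * (⌈Real.sqrt (Real.logb 2 (n / 2 ^ τ))⌉ : ℝ) + 2 + 4 * (τ : ℝ) ≤
      Real.logb 2 n + 8 * (⌈Real.sqrt (Real.logb 2 n)⌉ : ℝ) +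
        6 * (⌈Real.logb 2 (⌈Real.sqrt (Real.logb 2 n)⌉ : ℝ)⌉ : ℝ) + 2 := by
  have h1 : (1:ℝ) < 2 := one_lt_two
  have hn0 : (0:ℝ) < n := lt_of_lt_of_le two_pos hn
  have hlog2 : Real.log 2 ≠ 0 := by positivity
  set L := Real.logb 2 n with hLdef
  have hL1 : 1 ≤ L := by
    have := Real.logb_le_logb_of_le h1 two_pos hn
    simpa [Real.logb_self_eq_one h1] using this
  have hpow2 : (0:ℝ) < (2:ℝ) ^ τ := zpow_pos two_pos τ
  have hzpow : Real.logb 2 ((2:ℝ) ^ τ) = τ := by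
    rw [Real.logb, Real.log_zpow, mul_div_assoc, div_self hlog2, mul_one]
  have hdiv : Real.logb 2 (n / 2 ^ τ) = L - τ := by
    rw [Real.logb_div (ne_of_gt hn0) (ne_of_gt hpow2), hzpow]
  have hτL : (τ:ℝ) ≤ L := by
    have h2 : (2:ℝ) ^ τ ≤ n := by
      rw [le_div_iff₀ hpow2, one_mul] at hquot; exact hquot
    have := Real.logb_le_logb_of_le h1 hpow2 h2
    rwa [hzpow] at this
  set s := Real.sqrt L with hsdef
  set S : ℤ := ⌈s⌉ with hSdef
  have hs1 : 1 ≤ s := by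
    rw [hsdef, show (1:ℝ) = Real.sqrt 1 by simp]
    exact Real.sqrt_le_sqrt hL1
  have hsS : s ≤ (S:ℝ) := Int.le_ceil s
  have hSR : (1:ℝ) ≤ (S:ℝ) := le_trans hs1 hsS
  set g := Real.logb 2 (S:ℝ) with hgdef
  have hg0 : 0 ≤ g := Real.logb_nonneg h1 hSR
  set G : ℤ := ⌈g⌉ with hGdef
  have hgG : g ≤ (G:ℝ) := Int.le_ceil g
  have hG0 : (0:ℝ) ≤ (G:ℝ) := le_trans hg0 hgG
  have hτ0 : (0:ℝ) ≤ (τ:ℝ) := by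
    have : (1:ℝ) ≤ s + 2 * g := by linarith
    have h2 := Int.le_ceil (s + 2 * g)
    rw [← hτ] at h2
    linarith
  have hτbound : (τ:ℝ) ≤ (S:ℝ) + 2 * (G:ℝ) := by
    have : τ ≤ S + 2 * G := by
      rw [hτ]
      apply Int.ceil_le.mpr
      push_cast
      linarith
    exact_mod_cast this
  have hsqrt : ((⌈Real.sqrt (L - τ)⌉ : ℤ) : ℝ) ≤ (S:ℝ) := by
    have : ⌈Real.sqrt (L - τ)⌉ ≤ S := by
      apply Int.ceil_le_ceil
      exact Real.sqrt_le_sqrt (by linarith)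
    exact_mod_cast this
  rw [hdiv]
  linarith
end
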